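/- arXiv:1611.05212 — 6 statements merged into one kernel-verified Lean document; each statement's English description precedes it below -/
import Mathlib

section
/- The Picard map Φv := v − (α/L²) I⁻¹(Av − F) is a contraction on H with Lipschitz constant q = (1 − α²/L²)^{1/2} < 1, i.e., ‖Φv − Φw‖ ≤ q‖v − w‖ for all v, w ∈ H. -/
/-!
Writing `T v = I⁻¹(A v - F)`, the difference `Φ v - Φ w = d - ρ • (T v - T w)` with `d = v - w`
and `ρ = α/L²` expands as `‖d‖² - 2ρ⟪T v - T w, d⟫ + ρ²‖T v - T w‖²`. Since the Riesz map is
an isometry with `⟪I⁻¹ f, d⟫ = f d`, strong monotonicity and Lipschitz continuity of `A` bound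
this by `(1 - 2ρα + ρ²L²)‖d‖²`, and the step `ρ = α/L²` minimises the factor to `1 - α²/L²`.
-/

open InnerProductSpace

section GradientStep

variable {E : Type*} [NormedAddCommGroup E] [InnerProductSpace ℝ E]

theorem norm_sub_smul_sub_sq_le {T : E → E} {α L ρ : ℝ} (hρ : 0 ≤ ρ)
    (hmono : ∀ v w : E, α * ‖v - w‖ ^ 2 ≤ ⟪T v - T w, v - w⟫_ℝ)
    (hlip : ∀ v w : E, ‖T v - T w‖ ≤ L * ‖v - w‖) (v w : E) :
    ‖(v - ρ • T v) - (w - ρ • T w)‖ ^ 2 ≤ (1 - 2 * ρ * α + ρ ^ 2 * L ^ 2) * ‖v - w‖ ^ 2 := by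
  have hdiff : (v - ρ • T v) - (w - ρ • T w) = (v - w) - ρ • (T v - T w) := by
    rw [smul_sub]; abel
  have hinner : ρ * (α * ‖v - w‖ ^ 2) ≤ ⟪v - w, ρ • (T v - T w)⟫_ℝ := by
    rw [real_inner_smul_right, real_inner_comm]
    exact mul_le_mul_of_nonneg_left (hmono v w) hρ
  have hnorm : ‖ρ • (T v - T w)‖ ^ 2 ≤ ρ ^ 2 * (L * ‖v - w‖) ^ 2 := by
    rw [norm_smul, mul_pow, Real.norm_eq_abs, sq_abs]
    gcongr
    exact hlip v w
  rw [hdiff, norm_sub_sq_real]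
  nlinarith

end GradientStep

section Riesz

variable {H : Type*} [NormedAddCommGroup H] [InnerProductSpace ℝ H] [CompleteSpace H]

theorem toDual_symm_sub_sub_toDual_symm_sub (A : H → StrongDual ℝ H) (F : StrongDual ℝ H)
    (v w : H) :
    (toDual ℝ H).symm (A v - F) - (toDual ℝ H).symm (A w - F) = (toDual ℝ H).symm (A v - A w) := by
  rw [← map_sub, sub_sub_sub_cancel_right]

theorem inner_toDual_symm_sub_ge {A : H → StrongDual ℝ H} (F : StrongDual ℝ H) {α : ℝ}
    (hmono : ∀ v w : H, α * ‖w - v‖ ^ 2 ≤ (A w - A v) (w - v)) (v w : H) :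
    α * ‖v - w‖ ^ 2 ≤ ⟪(toDual ℝ H).symm (A v - F) - (toDual ℝ H).symm (A w - F), v - w⟫_ℝ := by
  rw [toDual_symm_sub_sub_toDual_symm_sub, toDual_symm_apply]
  exact hmono w v

theorem norm_toDual_symm_sub_le {A : H → StrongDual ℝ H} (F : StrongDual ℝ H) {L : ℝ}
    (hlip : ∀ v w : H, ‖A w - A v‖ ≤ L * ‖w - v‖) (v w : H) :
    ‖(toDual ℝ H).symm (A v - F) - (toDual ℝ H).symm (A w - F)‖ ≤ L * ‖v - w‖ := by
  rw [toDual_symm_sub_sub_toDual_symm_sub, LinearIsometryEquiv.norm_map]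
  exact hlip w v

end Riesz

theorem one_sub_two_mul_add_sq_mul_sq_of_optimal_step {α L : ℝ} (hL : L ≠ 0) :
    1 - 2 * (α / L ^ 2) * α + (α / L ^ 2) ^ 2 * L ^ 2 = 1 - α ^ 2 / L ^ 2 := by
  field_simp
  ring

theorem Real.sqrt_one_sub_div_sq_lt_one {α L : ℝ} (hα : α ≠ 0) (hL : L ≠ 0) :
    √(1 - α ^ 2 / L ^ 2) < 1 := by
  rw [Real.sqrt_lt' one_pos]
  have : 0 < α ^ 2 / L ^ 2 := by positivity
  linarith

theorem Real.le_sqrt_mul_of_sq_le_mul_sq {a b c : ℝ} (hb : 0 ≤ b) (h : a ^ 2 ≤ c * b ^ 2) :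
    a ≤ √c * b := by
  rw [← Real.sqrt_sq hb, ← Real.sqrt_mul' c (sq_nonneg b)]
  exact (le_abs_self a).trans (Real.abs_le_sqrt h)

/-- The Picard map `Φ v = v - (α/L²) • I⁻¹(A v - F)` is a contraction with
Lipschitz constant `q = √(1 - α²/L²) < 1`. -/
theorem picard_contraction
    {H : Type*} [NormedAddCommGroup H] [InnerProductSpace ℝ H] [CompleteSpace H]
    (A : H → StrongDual ℝ H) (F : StrongDual ℝ H)
    (α L : ℝ) (hα : 0 < α) (hαL : α ≤ L)
    (hmono : ∀ v w : H, α * ‖w - v‖ ^ 2 ≤ (A w - A v) (w - v))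
    (hlip : ∀ v w : H, ‖A w - A v‖ ≤ L * ‖w - v‖)
    (Φ : H → H)
    (hΦ : ∀ v : H, Φ v = v - (α / L ^ 2) • (InnerProductSpace.toDual ℝ H).symm (A v - F)) :
    Real.sqrt (1 - α ^ 2 / L ^ 2) < 1 ∧
      ∀ v w : H, ‖Φ v - Φ w‖ ≤ Real.sqrt (1 - α ^ 2 / L ^ 2) * ‖v - w‖ := by
  have hL : 0 < L := hα.trans_le hαL
  refine ⟨Real.sqrt_one_sub_div_sq_lt_one hα.ne' hL.ne', fun v w => ?_⟩
  apply Real.le_sqrt_mul_of_sq_le_mul_sq (norm_nonneg _)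
  rw [hΦ, hΦ, ← one_sub_two_mul_add_sq_mul_sq_of_optimal_step hL.ne']
  exact norm_sub_smul_sub_sq_le (by positivity) (inner_toDual_symm_sub_ge F hmono)
    (norm_toDual_symm_sub_le F hlip) v w
end

section
/- Reliability for Picard iterates: if ‖u⋆ − u⋆_•‖ ≤ C⋆_rel η_•(u⋆_•), if the estimator satisfies the stability estimate |η_•(v) − η_•(w)| ≤ C_stb ‖v − w‖, and if the Picard iterate u_•ⁿ satisfies ‖u_•ⁿ − u_•ⁿ⁻¹‖ ≤ λ η_•(u_•ⁿ), then ‖u⋆ − u_•ⁿ‖ ≤ C_rel η_•(u_•ⁿ) with C_rel := C⋆_rel + λ(1 + C⋆_rel C_stb) q/(1−q). -/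
/-- Reliability for Picard iterates:
`‖u⋆ - u_•ⁿ‖ ≤ C_rel η_•(u_•ⁿ)` with `C_rel = C⋆_rel + λ(1 + C⋆_rel C_stb) q/(1-q)`. -/
theorem reliability_picard
    {H : Type*} [NormedAddCommGroup H] [InnerProductSpace ℝ H] [CompleteSpace H]
    (η : H → ℝ) (hη : ∀ v : H, 0 ≤ η v)
    (Cstar Cstb lam q : ℝ)
    (hCstar : 0 < Cstar) (hCstb : 0 < Cstb) (hlam : 0 < lam)
    (hq0 : 0 < q) (hq1 : q < 1)
    (ustar ud un un1 : H)
    (hrel : ‖ustar - ud‖ ≤ Cstar * η ud)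
    (hstab : ∀ v w : H, |η v - η w| ≤ Cstb * ‖v - w‖)
    (hapost : ‖ud - un‖ ≤ q / (1 - q) * ‖un - un1‖)
    (hstop : ‖un - un1‖ ≤ lam * η un) :
    ‖ustar - un‖ ≤ (Cstar + lam * (1 + Cstar * Cstb) * (q / (1 - q))) * η un := by
  have hqq : 0 ≤ q / (1 - q) := div_nonneg hq0.le (by linarith)
  have htri : ‖ustar - un‖ ≤ ‖ustar - ud‖ + ‖ud - un‖ := by
    have := norm_sub_le_norm_sub_add_norm_sub ustar ud un
    linarith
  have h1 : |η ud - η un| ≤ Cstb * ‖ud - un‖ := hstab ud un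
  have h2 : η ud - η un ≤ Cstb * ‖ud - un‖ := (abs_le.mp h1).2
  have h3 : ‖ud - un‖ ≤ q / (1 - q) * (lam * η un) := by
    calc ‖ud - un‖ ≤ q / (1 - q) * ‖un - un1‖ := hapost
    _ ≤ q / (1 - q) * (lam * η un) := by
        exact mul_le_mul_of_nonneg_left hstop hqq
  nlinarith [hη un, hη ud, norm_nonneg (ud - un), mul_le_mul_of_nonneg_left h3 hCstb.le,
    mul_le_mul_of_nonneg_left h2 hCstar.le, mul_le_mul_of_nonneg_left h3 hCstar.le]
end

section
/- Suppose ‖u⋆_• − u_•ⁿ‖ ≤ (q/(1−q))‖u_•ⁿ − u_•ⁿ⁻¹‖, |η_•(v) − η_•(w)| ≤ C_stb‖v−w‖, and ‖u_•ⁿ − u_•ⁿ⁻¹‖ ≤ λ η_•(u_•ⁿ) with 0 < λ < C_λ⁻¹ where C_λ := C_stb q/(1−q). Then ‖u⋆_• − u_•ⁿ‖ ≤ λ (q/(1−q)) min{ η_•(u_•ⁿ), (1/(1−λC_λ)) η_•(u⋆_•) }. -/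
/-- Closeness of the Picard iterate to the (non-computable) Galerkin solution:
`‖u⋆_• - u_•ⁿ‖ ≤ λ (q/(1-q)) min{ η(u_•ⁿ), (1/(1-λC_λ)) η(u⋆_•) }`. -/
theorem picard_close_to_galerkin
    {H : Type*} [NormedAddCommGroup H] [InnerProductSpace ℝ H] [CompleteSpace H]
    (η : H → ℝ) (hη : ∀ v : H, 0 ≤ η v)
    (Cstb lam q : ℝ) (hCstb : 0 < Cstb) (hq0 : 0 < q) (hq1 : q < 1)
    (hlam0 : 0 < lam) (hlam1 : lam < (Cstb * (q / (1 - q)))⁻¹)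
    (ud un un1 : H)
    (hapost : ‖ud - un‖ ≤ q / (1 - q) * ‖un - un1‖)
    (hstab : ∀ v w : H, |η v - η w| ≤ Cstb * ‖v - w‖)
    (hstop : ‖un - un1‖ ≤ lam * η un) :
    ‖ud - un‖ ≤ lam * (q / (1 - q)) *
      min (η un) (1 / (1 - lam * (Cstb * (q / (1 - q)))) * η ud) := by
  have hq : 0 < q / (1 - q) := div_pos hq0 (by linarith)
  have hC : 0 < Cstb * (q / (1 - q)) := mul_pos hCstb hq
  have hden : 0 < 1 - lam * (Cstb * (q / (1 - q))) := by
    have h : lam * (Cstb * (q / (1 - q))) < 1 := by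
      calc lam * (Cstb * (q / (1 - q))) < (Cstb * (q / (1 - q)))⁻¹ * (Cstb * (q / (1 - q))) := by
            exact mul_lt_mul_of_pos_right hlam1 hC
        _ = 1 := inv_mul_cancel₀ hC.ne'
    nlinarith [mul_comm lam (Cstb * (q / (1 - q)))]
  -- main bound by η un
  have h1 : ‖ud - un‖ ≤ lam * (q / (1 - q)) * η un := by
    calc ‖ud - un‖ ≤ q / (1 - q) * ‖un - un1‖ := hapost
      _ ≤ q / (1 - q) * (lam * η un) := by
          exact mul_le_mul_of_nonneg_left hstop hq.le
      _ = lam * (q / (1 - q)) * η un := by ring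
  -- stability: η un ≤ η ud + Cstb ‖ud - un‖
  have hst : η un - η ud ≤ Cstb * ‖ud - un‖ := by
    have h := hstab un ud
    have := abs_le.mp h
    rw [norm_sub_rev ud un]; exact this.2
  have h2 : (1 - lam * (Cstb * (q / (1 - q)))) * η un ≤ η ud := by
    nlinarith [h1, hη un]
  have h3 : η un ≤ 1 / (1 - lam * (Cstb * (q / (1 - q)))) * η ud := by
    rw [div_mul_eq_mul_div, le_div_iff₀ hden]
    linarith [h2]
  rcases le_total (η un) (1 / (1 - lam * (Cstb * (q / (1 - q)))) * η ud) with h | h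
  · rw [min_eq_left h]; exact h1
  · rw [min_eq_right h]
    calc ‖ud - un‖ ≤ lam * (q / (1 - q)) * η un := h1
      _ ≤ _ := by
        exact mul_le_mul_of_nonneg_left h3 (by positivity)
end

section
/- Estimator equivalence: under the assumptions ‖u⋆_• − u_•ⁿ‖ ≤ λ(q/(1−q))(1/(1−λC_λ)) η_•(u⋆_•) and ‖u⋆_• − u_•ⁿ‖ ≤ λ(q/(1−q)) η_•(u_•ⁿ), with Lipschitz estimator |η_•(v) − η_•(w)| ≤ C_stb‖v−w‖ and 0 < λC_λ < 1 where C_λ = C_stb q/(1−q), there holds (1 − λC_λ) η_•(u_•ⁿ) ≤ η_•(u⋆_•) ≤ (1 + λC_λ) η_•(u_•ⁿ). -/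
/-- Estimator equivalence:
`(1 - λC_λ) η(u_•ⁿ) ≤ η(u⋆_•) ≤ (1 + λC_λ) η(u_•ⁿ)`. -/
theorem estimator_equivalence
    {H : Type*} [NormedAddCommGroup H] [InnerProductSpace ℝ H] [CompleteSpace H]
    (η : H → ℝ) (hη : ∀ v : H, 0 ≤ η v)
    (Cstb lam q : ℝ) (hCstb : 0 < Cstb) (hq0 : 0 < q) (hq1 : q < 1)
    (hlam0 : 0 < lam) (hlam1 : lam * (Cstb * (q / (1 - q))) < 1)
    (ud un : H)
    (h1 : ‖ud - un‖ ≤ lam * (q / (1 - q)) *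
      (1 / (1 - lam * (Cstb * (q / (1 - q)))) * η ud))
    (h2 : ‖ud - un‖ ≤ lam * (q / (1 - q)) * η un)
    (hstab : ∀ v w : H, |η v - η w| ≤ Cstb * ‖v - w‖) :
    (1 - lam * (Cstb * (q / (1 - q)))) * η un ≤ η ud ∧
      η ud ≤ (1 + lam * (Cstb * (q / (1 - q)))) * η un := by
  have key : |η ud - η un| ≤ lam * (Cstb * (q / (1 - q))) * η un := by
    calc |η ud - η un| ≤ Cstb * ‖ud - un‖ := hstab ud un
      _ ≤ Cstb * (lam * (q / (1 - q)) * η un) := by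
          exact mul_le_mul_of_nonneg_left h2 hCstb.le
      _ = lam * (Cstb * (q / (1 - q))) * η un := by ring
  rw [abs_le] at key
  constructor <;> nlinarith [key.1, key.2]
end

section
/- Linear convergence of the energy-estimator quantity: suppose Δ_ℓ := (E(u⋆_ℓ) − E(u⋆)) + γ η_ℓ(u⋆_ℓ)², where E(u⋆_ℓ) − E(u⋆) ≤ (L/2)‖u⋆_ℓ − u⋆‖², ‖u⋆ − u⋆_ℓ‖ ≤ C⋆_rel η_ℓ(u⋆_ℓ), the estimator reduction η_{ℓ+1}(u⋆_{ℓ+1})² ≤ q_est η_ℓ(u⋆_ℓ)² + C_est‖u⋆_{ℓ+1} − u⋆_ℓ‖² holds with 0 < q_est < 1, the energy satisfies (α/2)‖u⋆_{ℓ+1} − u⋆_ℓ‖² ≤ E(u⋆_ℓ) − E(u⋆_{ℓ+1}), and γ := α/(2C_est). Then there exists 0 < q_lin < 1, depending only on α, L, C⋆_rel, q_est, γ, such that Δ_{ℓ+1} ≤ q_lin Δ_ℓ for all ℓ. -/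
/-!
Write `d_ℓ = E(u⋆_ℓ) - E(u⋆)` and `γ = α / (2 C_est)`, so that `γ C_est = α / 2`. Multiplying the
estimator reduction by `γ` and absorbing `γ C_est ‖u⋆_{ℓ+1} - u⋆_ℓ‖²` into the energy decrease
gives the quasi-monotonicity `Δ_{ℓ+1} ≤ d_ℓ + q_est γ η_ℓ²`. Reliability and the upper energy bound
give `d_ℓ ≤ C γ η_ℓ²` with `C = L C⋆_rel² C_est / α`, hence `Δ_ℓ ≤ (1 + C) γ η_ℓ²`, so the
gain `(1 - q_est) γ η_ℓ²` is at least `(1 - q_lin) Δ_ℓ` for `q_lin = (q_est + C) / (1 + C)`.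
-/

lemma le_mul_sq_of_le_of_norm_le {H : Type*} [SeminormedAddCommGroup H] {x y : H}
    {e L C η : ℝ} (hL : 0 ≤ L) (he : e ≤ L / 2 * ‖x - y‖ ^ 2) (hrel : ‖y - x‖ ≤ C * η) :
    e ≤ L * C ^ 2 / 2 * η ^ 2 := by
  have hsq : ‖x - y‖ ^ 2 ≤ (C * η) ^ 2 := by
    rw [norm_sub_rev]
    exact pow_le_pow_left₀ (norm_nonneg _) hrel 2
  calc e ≤ L / 2 * ‖x - y‖ ^ 2 := he
    _ ≤ L / 2 * (C * η) ^ 2 := by gcongr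
    _ = L * C ^ 2 / 2 * η ^ 2 := by ring

lemma add_mul_sq_le_of_reduction_of_decrease {e e' η η' δ α Cest q : ℝ}
    (hα : 0 ≤ α) (hCest : 0 < Cest) (hred : η' ^ 2 ≤ q * η ^ 2 + Cest * δ)
    (hdec : α / 2 * δ ≤ e - e') :
    e' + α / (2 * Cest) * η' ^ 2 ≤ e + q * (α / (2 * Cest) * η ^ 2) := by
  have hγ : α / (2 * Cest) * Cest = α / 2 := by field_simp
  calc e' + α / (2 * Cest) * η' ^ 2
      ≤ e' + α / (2 * Cest) * (q * η ^ 2 + Cest * δ) := by gcongr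
    _ = e' + q * (α / (2 * Cest) * η ^ 2) + α / (2 * Cest) * Cest * δ := by ring
    _ ≤ e + q * (α / (2 * Cest) * η ^ 2) := by rw [hγ]; linarith

lemma add_mul_le_div_mul_add_of_le_mul {d x q C : ℝ} (hC : 0 ≤ C) (hq : q ≤ 1)
    (hd : d ≤ C * x) : d + q * x ≤ (q + C) / (1 + C) * (d + x) := by
  rw [div_mul_eq_mul_div, le_div_iff₀ (by linarith)]
  nlinarith [mul_le_mul_of_nonneg_left hd (sub_nonneg.2 hq)]

theorem linear_convergence_energy_general
    {H : Type*} [NormedAddCommGroup H]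
    (E : H → ℝ) (u : ℕ → H) (ustar : H) (η : ℕ → ℝ)
    (α L Cstar Cest qest : ℝ)
    (hα : 0 < α) (hL : 0 < L) (hCest : 0 < Cest)
    (hqest0 : 0 < qest) (hqest1 : qest < 1)
    (hE : ∀ ℓ, E (u ℓ) - E ustar ≤ L / 2 * ‖u ℓ - ustar‖ ^ 2)
    (hrel : ∀ ℓ, ‖ustar - u ℓ‖ ≤ Cstar * η ℓ)
    (hred : ∀ ℓ, η (ℓ + 1) ^ 2 ≤ qest * η ℓ ^ 2 + Cest * ‖u (ℓ + 1) - u ℓ‖ ^ 2)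
    (hdec : ∀ ℓ, α / 2 * ‖u (ℓ + 1) - u ℓ‖ ^ 2 ≤ E (u ℓ) - E (u (ℓ + 1))) :
    ∃ qlin : ℝ, 0 < qlin ∧ qlin < 1 ∧
      ∀ ℓ, (E (u (ℓ + 1)) - E ustar) + α / (2 * Cest) * η (ℓ + 1) ^ 2 ≤
        qlin * ((E (u ℓ) - E ustar) + α / (2 * Cest) * η ℓ ^ 2) := by
  set C := L * Cstar ^ 2 * Cest / α
  have hC : 0 ≤ C := by positivity
  have hCγ : L * Cstar ^ 2 / 2 = C * (α / (2 * Cest)) := by simp only [C]; field_simp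
  refine ⟨(qest + C) / (1 + C), by positivity, (div_lt_one (by positivity)).2 (by linarith),
    fun ℓ => ?_⟩
  have herr : E (u ℓ) - E ustar ≤ C * (α / (2 * Cest) * η ℓ ^ 2) := by
    have := le_mul_sq_of_le_of_norm_le hL.le (hE ℓ) (hrel ℓ)
    rwa [hCγ, mul_assoc] at this
  calc (E (u (ℓ + 1)) - E ustar) + α / (2 * Cest) * η (ℓ + 1) ^ 2
      ≤ (E (u ℓ) - E ustar) + qest * (α / (2 * Cest) * η ℓ ^ 2) :=
        add_mul_sq_le_of_reduction_of_decrease hα.le hCest (hred ℓ) (by linarith [hdec ℓ])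
    _ ≤ (qest + C) / (1 + C) * ((E (u ℓ) - E ustar) + α / (2 * Cest) * η ℓ ^ 2) :=
        add_mul_le_div_mul_add_of_le_mul hC hqest1.le herr

/-- Linear convergence of `Δ_ℓ = (E(u⋆_ℓ) - E(u⋆)) + γ η_ℓ²` with `γ = α/(2 C_est)`:
there exists `0 < q_lin < 1` with `Δ_{ℓ+1} ≤ q_lin Δ_ℓ` for all `ℓ`. -/
theorem linear_convergence_energy
    {H : Type*} [NormedAddCommGroup H] [InnerProductSpace ℝ H] [CompleteSpace H]
    (E : H → ℝ) (u : ℕ → H) (ustar : H) (η : ℕ → ℝ)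
    (α L Cstar Cest qest : ℝ)
    (hα : 0 < α) (hL : 0 < L) (hCstar : 0 < Cstar) (hCest : 0 < Cest)
    (hqest0 : 0 < qest) (hqest1 : qest < 1)
    (hηpos : ∀ ℓ, 0 ≤ η ℓ)
    (hmin : ∀ ℓ, 0 ≤ E (u ℓ) - E ustar)
    (hE : ∀ ℓ, E (u ℓ) - E ustar ≤ L / 2 * ‖u ℓ - ustar‖ ^ 2)
    (hrel : ∀ ℓ, ‖ustar - u ℓ‖ ≤ Cstar * η ℓ)
    (hred : ∀ ℓ, η (ℓ + 1) ^ 2 ≤ qest * η ℓ ^ 2 + Cest * ‖u (ℓ + 1) - u ℓ‖ ^ 2)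
    (hdec : ∀ ℓ, α / 2 * ‖u (ℓ + 1) - u ℓ‖ ^ 2 ≤ E (u ℓ) - E (u (ℓ + 1))) :
    ∃ qlin : ℝ, 0 < qlin ∧ qlin < 1 ∧
      ∀ ℓ, (E (u (ℓ + 1)) - E ustar) + α / (2 * Cest) * η (ℓ + 1) ^ 2 ≤
        qlin * ((E (u ℓ) - E ustar) + α / (2 * Cest) * η ℓ ^ 2) :=
  linear_convergence_energy_general E u ustar η α L Cstar Cest qest hα hL hCest hqest0 hqest1 hE
    hrel hred hdec
end

section
/- Optimal rate from linear convergence and mesh-closure: suppose η_ℓ ≥ 0 satisfy linear convergence η_{ℓ} ≤ C_lin q_lin^{ℓ−j} η_j for all 0 ≤ j ≤ ℓ with 0 < q_lin < 1, and the cumulative bound #T_ℓ − #T_0 + 1 ≤ C₁ Λ^{1/s} Σ_{j=0}^{ℓ−1} η_j^{−1/s} for all ℓ ≥ 1 with Λ, C₁, s > 0. Then #T_ℓ − #T_0 + 1 ≤ C₁ Λ^{1/s} (C_lin^{1/s}/(1 − q_lin^{1/s})) η_ℓ^{−1/s} for all ℓ ≥ 1; equivalently η_ℓ ≤ C₂ Λ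 (#T_ℓ − #T_0 + 1)^{−s} for some constant C₂ depending only on C₁, C_lin, q_lin, s. -/
open Finset

/-- Optimal rate from linear convergence and the mesh-closure (cumulative) bound. -/
theorem optimal_rate_from_linear_convergence
    (η : ℕ → ℝ) (hη : ∀ ℓ, 0 < η ℓ)
    (N : ℕ → ℕ) (hNmono : Monotone N) (hN0 : 1 ≤ N 0)
    (Clin qlin C₁ Lam s : ℝ)
    (hClin : 1 ≤ Clin) (hqlin0 : 0 < qlin) (hqlin1 : qlin < 1)
    (hC₁ : 0 < C₁) (hLam : 0 < Lam) (hs : 0 < s)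
    (hlin : ∀ j ℓ : ℕ, j ≤ ℓ → η ℓ ≤ Clin * qlin ^ (ℓ - j) * η j)
    (hcum : ∀ ℓ : ℕ, 1 ≤ ℓ →
      (N ℓ : ℝ) - (N 0 : ℝ) + 1 ≤
        C₁ * Lam ^ (1 / s) * ∑ j ∈ range ℓ, η j ^ (-(1 / s))) :
    (∀ ℓ : ℕ, 1 ≤ ℓ →
      (N ℓ : ℝ) - (N 0 : ℝ) + 1 ≤
        C₁ * Lam ^ (1 / s) * (Clin ^ (1 / s) / (1 - qlin ^ (1 / s))) * η ℓ ^ (-(1 / s))) ∧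
    ∃ C₂ : ℝ, 0 < C₂ ∧ ∀ ℓ : ℕ, 1 ≤ ℓ →
      η ℓ ≤ C₂ * Lam * ((N ℓ : ℝ) - (N 0 : ℝ) + 1) ^ (-s) := by
  have hc : 0 < 1 / s := by positivity
  set c : ℝ := 1 / s with hcdef
  set r : ℝ := qlin ^ c with hrdef
  have hr0 : 0 < r := Real.rpow_pos_of_pos hqlin0 c
  have hr1 : r < 1 := Real.rpow_lt_one hqlin0.le hqlin1 hc
  have hClin0 : (0:ℝ) < Clin := lt_of_lt_of_le one_pos hClin
  have hM : 0 < Clin ^ c / (1 - r) := by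
    apply div_pos (Real.rpow_pos_of_pos hClin0 c) (by linarith)
  -- per-term bound
  have hterm : ∀ j ℓ : ℕ, j ≤ ℓ →
      η j ^ (-c) ≤ Clin ^ c * r ^ (ℓ - j) * η ℓ ^ (-c) := by
    intro j ℓ hjl
    have hB : (0:ℝ) < Clin * qlin ^ (ℓ - j) := by positivity
    have h1 : (Clin * qlin ^ (ℓ - j) * η j) ^ (-c) ≤ η ℓ ^ (-c) :=
      Real.rpow_le_rpow_of_nonpos (hη ℓ) (hlin j ℓ hjl) (by linarith)
    have h2 : (Clin * qlin ^ (ℓ - j) * η j) ^ (-c)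
        = (Clin * qlin ^ (ℓ - j)) ^ (-c) * η j ^ (-c) :=
      Real.mul_rpow hB.le (hη j).le
    have h3 : (Clin * qlin ^ (ℓ - j)) ^ c * ((Clin * qlin ^ (ℓ - j)) ^ (-c) * η j ^ (-c))
        ≤ (Clin * qlin ^ (ℓ - j)) ^ c * η ℓ ^ (-c) := by
      apply mul_le_mul_of_nonneg_left _ (Real.rpow_pos_of_pos hB c).le
      rw [← h2]; exact h1
    have h4 : (Clin * qlin ^ (ℓ - j)) ^ c * ((Clin * qlin ^ (ℓ - j)) ^ (-c) * η j ^ (-c))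
        = η j ^ (-c) := by
      rw [← mul_assoc, ← Real.rpow_add hB, add_neg_cancel, Real.rpow_zero, one_mul]
    have h5 : (Clin * qlin ^ (ℓ - j)) ^ c = Clin ^ c * r ^ (ℓ - j) := by
      rw [Real.mul_rpow hClin0.le (by positivity), hrdef,
        ← Real.rpow_natCast qlin (ℓ - j), ← Real.rpow_natCast (qlin ^ c) (ℓ - j),
        ← Real.rpow_mul hqlin0.le, ← Real.rpow_mul hqlin0.le, mul_comm ((ℓ - j : ℕ) : ℝ) c]
    rw [← h4, h5]
    rw [h5] at h3
    exact h3
  -- geometric sum bound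
  have hgeom : ∀ ℓ : ℕ, ∑ j ∈ range ℓ, r ^ (ℓ - j) ≤ 1 / (1 - r) := by
    intro ℓ
    have h1 : ∑ j ∈ range ℓ, r ^ (ℓ - j) ≤ ∑ j ∈ range ℓ, r ^ (ℓ - 1 - j) := by
      apply sum_le_sum
      intro i hi
      exact pow_le_pow_of_le_one hr0.le hr1.le (by omega)
    have h2 : ∑ j ∈ range ℓ, r ^ (ℓ - 1 - j) = ∑ j ∈ range ℓ, r ^ j :=
      Finset.sum_range_reflect (fun j => r ^ j) ℓ
    have h3 : ∑ j ∈ range ℓ, r ^ j ≤ r ^ 0 / (1 - r) := by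
      rw [range_eq_Ico]
      exact geom_sum_Ico_le_of_lt_one hr0.le hr1
    simp only [pow_zero] at h3
    linarith
  -- main bound for part 1
  have key : ∀ ℓ : ℕ, 1 ≤ ℓ →
      (N ℓ : ℝ) - (N 0 : ℝ) + 1 ≤
        C₁ * Lam ^ c * (Clin ^ c / (1 - r)) * η ℓ ^ (-c) := by
    intro ℓ hℓ
    refine (hcum ℓ hℓ).trans ?_
    have hsum : ∑ j ∈ range ℓ, η j ^ (-c) ≤ (Clin ^ c / (1 - r)) * η ℓ ^ (-c) := by
      calc ∑ j ∈ range ℓ, η j ^ (-c)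
          ≤ ∑ j ∈ range ℓ, Clin ^ c * r ^ (ℓ - j) * η ℓ ^ (-c) :=
            sum_le_sum fun j hj => hterm j ℓ (mem_range.mp hj).le
        _ = Clin ^ c * η ℓ ^ (-c) * ∑ j ∈ range ℓ, r ^ (ℓ - j) := by
            rw [mul_sum]; apply sum_congr rfl; intro j _; ring
        _ ≤ Clin ^ c * η ℓ ^ (-c) * (1 / (1 - r)) := by
            apply mul_le_mul_of_nonneg_left (hgeom ℓ)
            have := hη ℓ
            positivity
        _ = (Clin ^ c / (1 - r)) * η ℓ ^ (-c) := by ring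
    calc C₁ * Lam ^ c * ∑ j ∈ range ℓ, η j ^ (-c)
        ≤ C₁ * Lam ^ c * ((Clin ^ c / (1 - r)) * η ℓ ^ (-c)) := by
          apply mul_le_mul_of_nonneg_left hsum
          have := Real.rpow_pos_of_pos hLam c
          positivity
      _ = C₁ * Lam ^ c * (Clin ^ c / (1 - r)) * η ℓ ^ (-c) := by ring
  refine ⟨key, (C₁ * (Clin ^ c / (1 - r))) ^ s, by positivity, ?_⟩
  intro ℓ hℓ
  set X : ℝ := (N ℓ : ℝ) - (N 0 : ℝ) + 1 with hXdef
  have hX1 : (1:ℝ) ≤ X := by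
    have := hNmono (Nat.zero_le ℓ)
    have : (N 0 : ℝ) ≤ (N ℓ : ℝ) := Nat.cast_le.mpr this
    simp [hXdef]; linarith
  have hX0 : (0:ℝ) < X := lt_of_lt_of_le one_pos hX1
  set K : ℝ := C₁ * Lam ^ c * (Clin ^ c / (1 - r)) with hKdef
  have hK0 : 0 < K := by positivity
  have h1 : X ≤ K * η ℓ ^ (-c) := key ℓ hℓ
  have h2 : X ^ s ≤ (K * η ℓ ^ (-c)) ^ s := Real.rpow_le_rpow hX0.le h1 hs.le
  have h3 : (K * η ℓ ^ (-c)) ^ s = K ^ s * (η ℓ)⁻¹ := by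
    rw [Real.mul_rpow hK0.le (Real.rpow_pos_of_pos (hη ℓ) _).le,
      ← Real.rpow_mul (hη ℓ).le, hcdef]
    have h : -(1/s) * s = -1 := by field_simp
    rw [h, Real.rpow_neg_one]
  have h4 : η ℓ * X ^ s ≤ K ^ s := by
    rw [h3] at h2
    have := mul_le_mul_of_nonneg_left h2 (hη ℓ).le
    calc η ℓ * X ^ s ≤ η ℓ * (K ^ s * (η ℓ)⁻¹) := this
      _ = K ^ s := by
          rw [← mul_assoc, mul_comm (η ℓ) (K ^ s), mul_assoc,
            mul_inv_cancel₀ (hη ℓ).ne', mul_one]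
  have hXs : 0 < X ^ s := Real.rpow_pos_of_pos hX0 s
  have h5 : η ℓ ≤ K ^ s * X ^ (-s) := by
    rw [Real.rpow_neg hX0.le]
    rw [le_mul_inv_iff₀ hXs]
    linarith [h4]
  have hKs : K ^ s = (C₁ * (Clin ^ c / (1 - r))) ^ s * Lam := by
    rw [hKdef]
    have : C₁ * Lam ^ c * (Clin ^ c / (1 - r))
        = (C₁ * (Clin ^ c / (1 - r))) * Lam ^ c := by ring
    rw [this, Real.mul_rpow (by positivity) (by positivity),
      ← Real.rpow_mul hLam.le, hcdef]
    have : 1/s * s = 1 := by field_simp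
    rw [this, Real.rpow_one]
  rw [hKs] at h5
  linarith [h5]
end
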